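/- arXiv:1702.07073 — 4 statements merged into one kernel-verified Lean document; each statement's English description precedes it below -/
import Mathlib

section
/- Blow-up ODE lemma (critical case β = 1): Let C₀ > 0, α > 0, and let I : [0,T) → ℝ be twice differentiable with I(0) > 0, I′(0) ≥ 0, and I″(t) + I′(t) ≥ C₀ I(t)^{1+α}/(1+t) for all t ∈ [0,T) where I is defined. Then I cannot exist globally: I blows up in finite time. Moreover, if I(0) = ε for small ε > 0, the lifespan satisfies T(ε) ≤ exp(a ε^{-α}) for some constant a > 0 independent of ε. -/
open Real Set

private lemma auxMono (f f' : ℝ → ℝ) (a b : ℝ)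
    (hd : ∀ x ∈ Icc a b, HasDerivAt f (f' x) x)
    (h0 : ∀ x ∈ Ioo a b, 0 ≤ f' x) : MonotoneOn f (Icc a b) := by
  apply monotoneOn_of_deriv_nonneg (convex_Icc a b)
  · exact fun x hx => (hd x hx).continuousAt.continuousWithinAt
  · intro x hx
    rw [interior_Icc] at hx
    exact (hd x (Ioo_subset_Icc_self hx)).differentiableAt.differentiableWithinAt
  · intro x hx
    rw [interior_Icc] at hx
    rw [(hd x (Ioo_subset_Icc_self hx)).deriv]
    exact h0 x hx

private lemma auxExp {x : ℝ} (h0 : 0 ≤ x) (h1 : x ≤ 1) : x / 2 ≤ 1 - Real.exp (-x) := by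
  have h2 : Real.exp (-x) = (Real.exp x)⁻¹ := Real.exp_neg x
  have h3 : (1 : ℝ) + x ≤ Real.exp x := by
    have := Real.add_one_le_exp x; linarith
  have h4 : (0:ℝ) < Real.exp x := Real.exp_pos x
  have h5 : Real.exp x * (Real.exp x)⁻¹ = 1 := mul_inv_cancel₀ h4.ne'
  rw [h2]
  nlinarith [sq_nonneg x]

private lemma auxBern {α y : ℝ} (hα : 0 < α) (hy : 1 ≤ y) :
    α * (y - 1) * y ^ (-(1:ℝ) - α) ≤ 1 - y ^ (-α) := by
  have hy0 : (0:ℝ) < y := lt_of_lt_of_le one_pos hy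
  set c : ℝ := α * y ^ (-(1:ℝ) - α) with hc
  have hmono : MonotoneOn (fun x : ℝ => -(x ^ (-α)) - c * x) (Icc 1 y) := by
    apply auxMono _ (fun x => -((-α) * x ^ (-α - 1)) - c) 1 y
    · intro x hx
      have hx0 : x ≠ 0 := by
        have := hx.1; intro h; rw [h] at this; linarith
      have : HasDerivAt (fun x : ℝ => c * x) c x := by
        simpa using (hasDerivAt_id x).const_mul c
      exact ((Real.hasDerivAt_rpow_const (Or.inl hx0)).neg).sub this
    · intro x hx
      have hx0 : (0:ℝ) < x := lt_trans one_pos hx.1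
      have hxy : x ≤ y := le_of_lt hx.2
      have : y ^ (-(1:ℝ) - α) ≤ x ^ (-(1:ℝ) - α) :=
        Real.rpow_le_rpow_of_nonpos hx0 hxy (by linarith)
      have he : -α - 1 = -(1:ℝ) - α := by ring
      rw [he]
      have hαx : α * (y ^ (-(1:ℝ) - α)) ≤ α * (x ^ (-(1:ℝ)-α)) :=
        mul_le_mul_of_nonneg_left this hα.le
      simp only [hc]
      linarith
  have h1 := hmono (left_mem_Icc.mpr hy) (right_mem_Icc.mpr hy) hy
  simp only [Real.one_rpow, one_rpow, mul_one] at h1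
  have hyy : y ^ (-(1:ℝ) - α) * y = y ^ (-α) := by
    rw [← Real.rpow_add_one hy0.ne' (-(1:ℝ) - α)]
    ring_nf
  have hcy : c * y = α * y ^ (-α) := by rw [hc]; rw [mul_assoc, hyy]
  nlinarith [h1]

private noncomputable def lamF (C₀ α M : ℝ) : ℝ := min (1/2) (2 / Real.sqrt (C₀ * M^α))
private noncomputable def PsiF (p q C₀ α M : ℝ) : ℝ :=
  p / Real.sqrt (C₀ * M^α) + q / (C₀ * M^α)

private lemma auxPsiAnti (p q C₀ α : ℝ) (hC₀ : 0 < C₀) (hα : 0 < α)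
    (hp : 0 < p) (hq : 0 < q) {x y : ℝ} (hx : 0 < x) (hxy : x ≤ y) :
    PsiF p q C₀ α y ≤ PsiF p q C₀ α x := by
  have hsx : 0 < C₀ * x^α := mul_pos hC₀ (Real.rpow_pos_of_pos hx α)
  have hsxy : C₀ * x^α ≤ C₀ * y^α :=
    mul_le_mul_of_nonneg_left (Real.rpow_le_rpow hx.le hxy hα.le) hC₀.le
  have h1 : p / Real.sqrt (C₀*y^α) ≤ p / Real.sqrt (C₀*x^α) :=
    div_le_div_of_nonneg_left hp.le (Real.sqrt_pos.mpr hsx) (Real.sqrt_le_sqrt hsxy)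
  have h2 : q / (C₀*y^α) ≤ q / (C₀*x^α) :=
    div_le_div_of_nonneg_left hq.le hsx hsxy
  simp only [PsiF]; linarith

private lemma auxPsiNonneg (p q C₀ α : ℝ) (hC₀ : 0 < C₀) (hα : 0 < α)
    (hp : 0 < p) (hq : 0 < q) {x : ℝ} (hx : 0 < x) : 0 ≤ PsiF p q C₀ α x := by
  have hsx : 0 < C₀ * x^α := mul_pos hC₀ (Real.rpow_pos_of_pos hx α)
  have := Real.sqrt_pos.mpr hsx
  simp only [PsiF]; positivity

private lemma auxLamPos (C₀ α M : ℝ) (hC₀ : 0 < C₀) (hM : 0 < M) :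
    0 < lamF C₀ α M ∧ lamF C₀ α M ≤ 1/2 := by
  have hsx : 0 < C₀ * M^α := mul_pos hC₀ (Real.rpow_pos_of_pos hM α)
  have := Real.sqrt_pos.mpr hsx
  constructor
  · apply lt_min (by norm_num) (by positivity)
  · exact min_le_left _ _

private lemma auxDeltaEq (C₀ α M : ℝ) (hC₀ : 0 < C₀) (hM : 0 < M) :
    C₀ * M^(1+α) * (lamF C₀ α M)^2 / 4 = M * min (C₀ * M^α / 16) 1 := by
  have hs0 : 0 < C₀ * M^α := mul_pos hC₀ (Real.rpow_pos_of_pos hM α)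
  have hsq0 : 0 < Real.sqrt (C₀*M^α) := Real.sqrt_pos.mpr hs0
  have hsqs : Real.sqrt (C₀*M^α) ^ 2 = C₀*M^α := Real.sq_sqrt hs0.le
  have hM1α : M^(1+α) = M * M^α := by rw [Real.rpow_add hM, Real.rpow_one]
  rcases le_total (1/2 : ℝ) (2 / Real.sqrt (C₀ * M^α)) with hc | hc
  · have hlam : lamF C₀ α M = 1/2 := min_eq_left hc
    have hsqle : Real.sqrt (C₀*M^α) ≤ 4 := by
      rw [le_div_iff₀ hsq0] at hc; linarith
    have hsle : C₀*M^α ≤ 16 := by nlinarith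
    have hmin : min (C₀*M^α/16) 1 = C₀*M^α/16 := min_eq_left (by linarith)
    rw [hlam, hmin, hM1α]; ring
  · have hlam : lamF C₀ α M = 2 / Real.sqrt (C₀ * M^α) := min_eq_right hc
    have hsqge : 4 ≤ Real.sqrt (C₀*M^α) := by
      rw [div_le_iff₀ hsq0] at hc; linarith
    have hsge : 16 ≤ C₀*M^α := by nlinarith
    have hmin : min (C₀*M^α/16) 1 = 1 := min_eq_right (by linarith)
    rw [hlam, hmin, hM1α]
    rw [div_pow, hsqs]
    field_simp
    ring

set_option maxHeartbeats 1000000 in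
private lemma auxKey (C₀ α p q : ℝ) (hC₀ : 0 < C₀) (hα : 0 < α)
    (hp_def : p = 4 / (1 - (2:ℝ)^(-(α/2)))) (hq_def : q = 16*(2:ℝ)^(1+α)/α)
    {M M' : ℝ} (hM : 0 < M) (hM' : M + C₀*M^(1+α)*(lamF C₀ α M)^2/4 ≤ M') :
    2*(lamF C₀ α M) + PsiF p q C₀ α M' ≤ PsiF p q C₀ α M := by
  have h2m : (2:ℝ)^(-(α/2)) < 1 :=
    Real.rpow_lt_one_of_one_lt_of_neg one_lt_two (by linarith)
  have h2mp : (0:ℝ) < (2:ℝ)^(-(α/2)) := Real.rpow_pos_of_pos two_pos _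
  have hp : 0 < p := by rw [hp_def]; apply div_pos (by norm_num); linarith
  have hq : 0 < q := by
    rw [hq_def]
    exact div_pos (mul_pos (by norm_num) (Real.rpow_pos_of_pos two_pos _)) hα
  have hs0 : 0 < C₀ * M^α := mul_pos hC₀ (Real.rpow_pos_of_pos hM α)
  have hsq0 : 0 < Real.sqrt (C₀*M^α) := Real.sqrt_pos.mpr hs0
  have hsqs : Real.sqrt (C₀*M^α) ^ 2 = C₀*M^α := Real.sq_sqrt hs0.le
  have hM1α : M^(1+α) = M * M^α := by rw [Real.rpow_add hM, Real.rpow_one]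
  rcases le_total (1/2 : ℝ) (2 / Real.sqrt (C₀ * M^α)) with hc | hc
  -- Case 1 : small M
  · have hlam : lamF C₀ α M = 1/2 := min_eq_left hc
    have hsqle : Real.sqrt (C₀*M^α) ≤ 4 := by
      rw [le_div_iff₀ hsq0] at hc; linarith
    have hsle : C₀*M^α ≤ 16 := by nlinarith
    set y : ℝ := 1 + (C₀*M^α)/16 with hy_def
    have hy1 : 1 ≤ y := by rw [hy_def]; nlinarith
    have hy2 : y ≤ 2 := by rw [hy_def]; linarith
    have hy0 : (0:ℝ) < y := by linarith
    have hδ : C₀*M^(1+α)*(lamF C₀ α M)^2/4 = M*((C₀*M^α)/16) := by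
      rw [hlam, hM1α]; ring
    have hMy : M * y ≤ M' := by
      rw [hy_def]
      calc M * (1 + (C₀*M^α)/16) = M + M*((C₀*M^α)/16) := by ring
        _ = M + C₀*M^(1+α)*(lamF C₀ α M)^2/4 := by rw [hδ]
        _ ≤ M' := hM'
    have hMy0 : 0 < M * y := mul_pos hM hy0
    have hPsi1 : PsiF p q C₀ α M' ≤ PsiF p q C₀ α (M*y) :=
      auxPsiAnti p q C₀ α hC₀ hα hp hq hMy0 hMy
    have hyα0 : (0:ℝ) < y^α := Real.rpow_pos_of_pos hy0 α
    have hyα1 : (1:ℝ) ≤ y^α := by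
      have := Real.rpow_le_rpow_of_exponent_le hy1 hα.le (y := 0)
      simpa [Real.rpow_zero] using this
    have hsy : C₀*(M*y)^α = (C₀*M^α) * y^α := by
      rw [Real.mul_rpow hM.le hy0.le]; ring
    have hsy0 : 0 < (C₀*M^α) * y^α := mul_pos hs0 hyα0
    have hterm_p : p / Real.sqrt (C₀*(M*y)^α) ≤ p / Real.sqrt (C₀*M^α) := by
      rw [hsy]
      apply div_le_div_of_nonneg_left hp.le hsq0 (Real.sqrt_le_sqrt (by nlinarith))
    have hterm_q : q / (C₀*(M*y)^α) ≤ q/(C₀*M^α) - 1 := by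
      rw [hsy]
      have hbern := auxBern hα hy1
      have hylow : (2:ℝ)^(-(1:ℝ)-α) ≤ y^(-(1:ℝ)-α) :=
        Real.rpow_le_rpow_of_nonpos hy0 hy2 (by linarith)
      have hy1' : y - 1 = (C₀*M^α)/16 := by rw [hy_def]; ring
      have h2c : (2:ℝ)^(1+α) * (2:ℝ)^(-(1:ℝ)-α) = 1 := by
        rw [← Real.rpow_add two_pos]; norm_num
      have hqmul : q*α = 16*(2:ℝ)^(1+α) := by
        rw [hq_def]; field_simp
      have hqα : q*α*(2:ℝ)^(-(1:ℝ)-α)/16 = 1 := by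
        calc q*α*(2:ℝ)^(-(1:ℝ)-α)/16 = (q*α)*(2:ℝ)^(-(1:ℝ)-α)/16 := by ring
          _ = (16*(2:ℝ)^(1+α))*(2:ℝ)^(-(1:ℝ)-α)/16 := by rw [hqmul]
          _ = (2:ℝ)^(1+α)*(2:ℝ)^(-(1:ℝ)-α) := by ring
          _ = 1 := h2c
      -- q/(s y^α) = (q/s) * y^(-α)
      have hrw : q / ((C₀*M^α) * y^α) = (q/(C₀*M^α)) * y^(-α) := by
        rw [Real.rpow_neg hy0.le]
        field_simp
      rw [hrw]
      have hqs : 0 < q/(C₀*M^α) := div_pos hq hs0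
      -- (q/s)*(1 - y^{-α}) ≥ (q/s)*α*(y-1)*y^{-1-α} ≥ (q/s)*α*(s/16)*2^{-1-α} = 1
      have hstep1 : (q/(C₀*M^α)) * (α * (y-1) * y^(-(1:ℝ)-α)) ≤ (q/(C₀*M^α)) * (1 - y^(-α)) :=
        mul_le_mul_of_nonneg_left hbern hqs.le
      have hstep2 : (1:ℝ) ≤ (q/(C₀*M^α)) * (α * (y-1) * y^(-(1:ℝ)-α)) := by
        rw [hy1']
        have e1 : (q/(C₀*M^α)) * (α * ((C₀*M^α)/16) * y^(-(1:ℝ)-α))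
            = (q*α/16) * y^(-(1:ℝ)-α) := by field_simp
        rw [e1]
        calc (1:ℝ) = q*α*(2:ℝ)^(-(1:ℝ)-α)/16 := hqα.symm
          _ = (q*α/16) * (2:ℝ)^(-(1:ℝ)-α) := by ring
          _ ≤ (q*α/16) * y^(-(1:ℝ)-α) := by
              apply mul_le_mul_of_nonneg_left hylow
              positivity
      have hexpand : (q/(C₀*M^α)) * (1 - y^(-α))
          = q/(C₀*M^α) - (q/(C₀*M^α))*y^(-α) := by ring
      linarith [hstep1, hstep2]
    have hub : PsiF p q C₀ α (M*y) ≤ PsiF p q C₀ α M - 1 := by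
      simp only [PsiF]
      linarith [hterm_p, hterm_q]
    rw [hlam]
    have := le_trans hPsi1 hub
    linarith
  -- Case 2 : large M
  · have hlam : lamF C₀ α M = 2 / Real.sqrt (C₀ * M^α) := min_eq_right hc
    have hδ : C₀*M^(1+α)*(lamF C₀ α M)^2/4 = M := by
      rw [hlam, hM1α, div_pow, hsqs]
      field_simp; ring
    have hM2 : 2*M ≤ M' := by rw [hδ] at hM'; linarith
    have hPsi1 : PsiF p q C₀ α M' ≤ PsiF p q C₀ α (2*M) :=
      auxPsiAnti p q C₀ α hC₀ hα hp hq (by linarith) hM2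
    have h2α1 : (1:ℝ) ≤ (2:ℝ)^α := by
      have := Real.rpow_le_rpow_of_exponent_le one_le_two hα.le (y := 0)
      simpa [Real.rpow_zero] using this
    have h2α0 : (0:ℝ) < (2:ℝ)^α := Real.rpow_pos_of_pos two_pos α
    have hs2 : C₀*(2*M)^α = (2:ℝ)^α * (C₀*M^α) := by
      rw [Real.mul_rpow (by norm_num : (0:ℝ) ≤ 2) hM.le]; ring
    have h2half0 : (0:ℝ) < (2:ℝ)^(α/2) := Real.rpow_pos_of_pos two_pos _
    have hsqrt2α : Real.sqrt ((2:ℝ)^α) = (2:ℝ)^(α/2) := by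
      rw [show (2:ℝ)^α = ((2:ℝ)^(α/2))^2 by
        rw [sq, ← Real.rpow_add two_pos]; ring_nf]
      exact Real.sqrt_sq h2half0.le
    have hterm_q : q / (C₀*(2*M)^α) ≤ q/(C₀*M^α) := by
      rw [hs2]
      apply div_le_div_of_nonneg_left hq.le hs0 (by nlinarith)
    have hterm_p : p / Real.sqrt (C₀*(2*M)^α)
        = p / Real.sqrt (C₀*M^α) * (2:ℝ)^(-(α/2)) := by
      rw [hs2, Real.sqrt_mul h2α0.le, hsqrt2α, Real.rpow_neg (by norm_num : (0:ℝ) ≤ 2),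
        mul_comm ((2:ℝ)^(α/2)), div_mul_eq_div_div, div_eq_mul_inv]
    have hp4 : p * (1 - (2:ℝ)^(-(α/2))) = 4 := by
      have hne : (1:ℝ) - (2:ℝ)^(-(α/2)) ≠ 0 := by linarith
      rw [hp_def]
      exact div_mul_cancel₀ 4 hne
    have hgoal : 2*(2 / Real.sqrt (C₀*M^α)) + PsiF p q C₀ α (2*M) ≤ PsiF p q C₀ α M := by
      simp only [PsiF]
      rw [hterm_p]
      have e2 : p / Real.sqrt (C₀*M^α) - p / Real.sqrt (C₀*M^α) * (2:ℝ)^(-(α/2))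
          = (p * (1 - (2:ℝ)^(-(α/2)))) / Real.sqrt (C₀*M^α) := by
        field_simp
      have e3 : 2*(2 / Real.sqrt (C₀*M^α)) = 4 / Real.sqrt (C₀*M^α) := by ring
      rw [e3]
      have e4 : (4:ℝ) / Real.sqrt (C₀*M^α)
          = (p * (1 - (2:ℝ)^(-(α/2)))) / Real.sqrt (C₀*M^α) := by rw [hp4]
      linarith [hterm_q, e2, e4]
    rw [hlam]
    linarith [hPsi1, hgoal]
private lemma auxPsiBound (p q C₀ α ε : ℝ) (hC₀ : 0 < C₀) (hα : 0 < α)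
    (hp : 0 < p) (hq : 0 < q) (hε : 0 < ε) (hε1 : ε ≤ 1) :
    PsiF p q C₀ α ε ≤ (p / Real.sqrt C₀ + q / C₀) * ε^(-α) := by
  have hεα : (0:ℝ) < ε^α := Real.rpow_pos_of_pos hε α
  have hεa2 : (0:ℝ) < ε^(α/2) := Real.rpow_pos_of_pos hε _
  have hsC : (0:ℝ) < Real.sqrt C₀ := Real.sqrt_pos.mpr hC₀
  have h1 : Real.sqrt (C₀*ε^α) = Real.sqrt C₀ * Real.sqrt (ε^α) := Real.sqrt_mul hC₀.le _
  have h2 : Real.sqrt (ε^α) = ε^(α/2) := by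
    rw [show ε^α = (ε^(α/2))^2 by rw [sq, ← Real.rpow_add hε]; ring_nf]
    exact Real.sqrt_sq hεa2.le
  have e1 : p / (Real.sqrt C₀ * ε^(α/2)) = (p/Real.sqrt C₀) * ε^(-(α/2)) := by
    rw [Real.rpow_neg hε.le, div_mul_eq_div_div, div_eq_mul_inv]
  have e2 : q / (C₀*ε^α) = (q/C₀)*ε^(-α) := by
    rw [Real.rpow_neg hε.le, div_mul_eq_div_div, div_eq_mul_inv]
  have e3 : ε^(-(α/2)) ≤ ε^(-α) :=
    Real.rpow_le_rpow_of_exponent_ge hε hε1 (by linarith)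
  have e4 : (p/Real.sqrt C₀) * ε^(-(α/2)) ≤ (p/Real.sqrt C₀) * ε^(-α) :=
    mul_le_mul_of_nonneg_left e3 (by positivity)
  simp only [PsiF]
  rw [h1, h2, e1, e2]
  have : (p / Real.sqrt C₀ + q / C₀) * ε^(-α)
      = (p/Real.sqrt C₀) * ε^(-α) + (q/C₀)*ε^(-α) := by ring
  rw [this]
  linarith
set_option maxHeartbeats 2000000 in
private lemma blowup_aux (C₀ α : ℝ) (hC₀ : 0 < C₀) (hα : 0 < α)
    (ε : ℝ) (hε : 0 < ε) (hε1 : ε ≤ 1)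
    (T : ℝ) (I I' I'' : ℝ → ℝ)
    (hI : ∀ t ∈ Ico (0 : ℝ) T, HasDerivAt I (I' t) t)
    (hI' : ∀ t ∈ Ico (0 : ℝ) T, HasDerivAt I' (I'' t) t)
    (hI0 : I 0 = ε) (hI'0 : 0 ≤ I' 0)
    (hineq : ∀ t ∈ Ico (0 : ℝ) T, C₀ * I t ^ (1 + α) / (1 + t) ≤ I'' t + I' t)
    (p q a : ℝ)
    (hp_def : p = 4 / (1 - (2:ℝ)^(-(α/2)))) (hq_def : q = 16*(2:ℝ)^(1+α)/α)
    (ha_def : a = p / Real.sqrt C₀ + q / C₀ + 1)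
    (hTgt : Real.exp (a * ε ^ (-α)) < T) : False := by
  have hT0 : 0 < T := lt_trans (Real.exp_pos _) hTgt
  -- core: positivity on [0,b) implies I' ≥ 0 and monotone on [0,b]
  have hcore : ∀ b, 0 ≤ b → b < T → (∀ x, 0 ≤ x → x < b → 0 < I x) →
      (∀ x ∈ Icc (0:ℝ) b, 0 ≤ I' x) ∧ MonotoneOn I (Icc (0:ℝ) b) := by
    intro b hb0 hbT hpos
    have hsub : Icc (0:ℝ) b ⊆ Ico (0:ℝ) T := fun x hx => ⟨hx.1, lt_of_le_of_lt hx.2 hbT⟩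
    have hE : MonotoneOn (fun x => Real.exp x * I' x) (Icc (0:ℝ) b) := by
      apply auxMono _ (fun x => Real.exp x * I'' x + Real.exp x * I' x)
      · intro x hx
        have : HasDerivAt (fun y => Real.exp y * I' y) (Real.exp x * I' x + Real.exp x * I'' x) x :=
          (Real.hasDerivAt_exp x).mul (hI' x (hsub hx))
        convert this using 1
        ring
      · intro x hx
        have hIx : 0 < I x := hpos x hx.1.le hx.2
        have h1 : 0 ≤ C₀ * I x ^ (1+α) / (1 + x) :=
          div_nonneg (mul_nonneg hC₀.le (Real.rpow_pos_of_pos hIx _).le) (by linarith [hx.1])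
        have h2 := hineq x (hsub (Ioo_subset_Icc_self hx))
        nlinarith [Real.exp_pos x]
    have hI'nn : ∀ x ∈ Icc (0:ℝ) b, 0 ≤ I' x := by
      intro x hx
      have h0 : (0:ℝ) ∈ Icc (0:ℝ) b := left_mem_Icc.mpr hb0
      have := hE h0 hx hx.1
      simp only [Real.exp_zero, one_mul] at this
      nlinarith [Real.exp_pos x, le_trans hI'0 this]
    exact ⟨hI'nn, auxMono I I' 0 b (fun x hx => hI x (hsub hx))
      (fun x hx => hI'nn x (Ioo_subset_Icc_self hx))⟩
  -- positivity
  have hpos : ∀ b, 0 ≤ b → b < T → ∀ x, x ∈ Icc (0:ℝ) b → ε/2 < I x := by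
    intro b hb0 hbT
    by_contra hcon
    push_neg at hcon
    obtain ⟨x₀, hx₀, hx₀le⟩ := hcon
    set A : Set ℝ := {x | x ∈ Icc (0:ℝ) b ∧ I x ≤ ε/2} with hA
    have hAne : A.Nonempty := ⟨x₀, hx₀, hx₀le⟩
    have hIcont : ContinuousOn I (Icc (0:ℝ) b) := fun x hx =>
      ((hI x ⟨hx.1, lt_of_le_of_lt hx.2 hbT⟩).continuousAt).continuousWithinAt
    have hAclosed : IsClosed A := by
      have heq : A = Icc (0:ℝ) b ∩ I ⁻¹' (Iic (ε/2)) := by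
        ext x; simp [hA, Set.mem_inter_iff, Set.mem_preimage, Set.mem_Iic]
      rw [heq]
      exact hIcont.preimage_isClosed_of_isClosed isClosed_Icc isClosed_Iic
    have hAbdd : BddBelow A := ⟨0, fun x hx => hx.1.1⟩
    set u := sInf A with hu
    have huA : u ∈ A := hAclosed.csInf_mem hAne hAbdd
    have hu0 : 0 < u := by
      rcases eq_or_lt_of_le huA.1.1 with h | h
      · exfalso; have := huA.2; rw [← h, hI0] at this; linarith
      · exact h
    have hlow : ∀ x, 0 ≤ x → x < u → 0 < I x := by
      intro x hx hxu
      by_contra h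
      push_neg at h
      have hxA : x ∈ A := ⟨⟨hx, le_trans hxu.le huA.1.2⟩, by linarith⟩
      exact absurd (csInf_le hAbdd hxA) (not_le.mpr hxu)
    have huT : u < T := lt_of_le_of_lt huA.1.2 hbT
    obtain ⟨hI'nn, hImono⟩ := hcore u hu0.le huT hlow
    have h1 : ε ≤ I u := by
      have := hImono (left_mem_Icc.mpr hu0.le) (right_mem_Icc.mpr hu0.le) hu0.le
      rw [hI0] at this; exact this
    linarith [huA.2]
  -- global consequences
  have hIm : ∀ x y, 0 ≤ x → x ≤ y → y < T → I x ≤ I y := by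
    intro x y hx hxy hyT
    have hy0 : 0 ≤ y := le_trans hx hxy
    obtain ⟨_, hmono⟩ := hcore y hy0 hyT (fun z hz hzy => by
      linarith [hpos y hy0 hyT z ⟨hz, hzy.le⟩])
    exact hmono ⟨hx, hxy⟩ (right_mem_Icc.mpr hy0) hxy
  have hIge : ∀ x, 0 ≤ x → x < T → ε ≤ I x := by
    intro x hx hxT
    have := hIm 0 x le_rfl hx hxT
    rwa [hI0] at this
  have hI'ge : ∀ x, 0 ≤ x → x < T → 0 ≤ I' x := by
    intro x hx hxT
    obtain ⟨h1, _⟩ := hcore x hx hxT (fun z hz hzx => by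
      linarith [hpos x hx hxT z ⟨hz, hzx.le⟩])
    exact h1 x (right_mem_Icc.mpr hx)
  -- Part 2: derivative lower bound
  have hderiv : ∀ t₀ t, 0 ≤ t₀ → t₀ ≤ t → t < T →
      C₀ * (I t₀)^(1+α) * (1 - Real.exp (t₀ - t)) / (1+t) ≤ I' t := by
    intro t₀ t h0 hle hT'
    have hMε : ε ≤ I t₀ := hIge t₀ h0 (lt_of_le_of_lt hle hT')
    have hMpos : 0 < I t₀ := lt_of_lt_of_le hε hMε
    have h1t : (0:ℝ) < 1 + t := by linarith
    set C := C₀ * (I t₀)^(1+α) / (1+t) with hC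
    have hφ : MonotoneOn (fun x => Real.exp x * I' x - C * Real.exp x) (Icc t₀ t) := by
      apply auxMono _ (fun x => (Real.exp x * I'' x + Real.exp x * I' x) - C * Real.exp x)
      · intro x hx
        have hmem : x ∈ Ico (0:ℝ) T := ⟨le_trans h0 hx.1, lt_of_le_of_lt hx.2 hT'⟩
        have hd1 := (Real.hasDerivAt_exp x).mul (hI' x hmem)
        have hd2 := (Real.hasDerivAt_exp x).const_mul C
        have : HasDerivAt (fun y => Real.exp y * I' y - C * Real.exp y)
            (Real.exp x * I' x + Real.exp x * I'' x - C * Real.exp x) x := hd1.sub hd2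
        convert this using 1
        ring
      · intro x hx
        have hx0 : 0 ≤ x := le_trans h0 hx.1.le
        have hxT : x < T := lt_trans hx.2 hT'
        have hIxM : I t₀ ≤ I x := hIm t₀ x h0 hx.1.le hxT
        have hrp : (I t₀)^(1+α) ≤ (I x)^(1+α) :=
          Real.rpow_le_rpow hMpos.le hIxM (by linarith)
        have h1x : (0:ℝ) < 1 + x := by linarith
        have hCle : C ≤ C₀ * (I x) ^ (1+α) / (1+x) := by
          rw [hC]
          apply div_le_div₀ (mul_nonneg hC₀.le (Real.rpow_pos_of_pos (lt_of_lt_of_le hMpos hIxM) _).le)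
            (mul_le_mul_of_nonneg_left hrp hC₀.le) h1x (by linarith [hx.2])
        have hmain := le_trans hCle (hineq x ⟨hx0, hxT⟩)
        nlinarith [Real.exp_pos x]
    have h2 := hφ (left_mem_Icc.mpr hle) (right_mem_Icc.mpr hle) hle
    simp only at h2
    have hI'nn : 0 ≤ I' t₀ := hI'ge t₀ h0 (lt_of_le_of_lt hle hT')
    have hee : Real.exp (t₀ - t) * Real.exp t = Real.exp t₀ := by
      rw [← Real.exp_add]; ring_nf
    have hept : (0:ℝ) < Real.exp t := Real.exp_pos t
    have hept0 : (0:ℝ) < Real.exp t₀ := Real.exp_pos t₀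
    have key : C * (1 - Real.exp (t₀ - t)) * Real.exp t ≤ I' t * Real.exp t := by
      have e1 : C * (1 - Real.exp (t₀ - t)) * Real.exp t
          = C * Real.exp t - C * (Real.exp (t₀ - t) * Real.exp t) := by ring
      rw [e1, hee]
      nlinarith [mul_nonneg hept0.le hI'nn]
    have : C * (1 - Real.exp (t₀ - t)) ≤ I' t := le_of_mul_le_mul_right key hept
    calc C₀ * (I t₀)^(1+α) * (1 - Real.exp (t₀ - t)) / (1+t)
        = C * (1 - Real.exp (t₀ - t)) := by rw [hC]; ring
      _ ≤ I' t := this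
  -- Part 3: one step
  have hstep : ∀ t₀ l, 0 ≤ t₀ → 0 < l → l ≤ 1/2 → t₀ + 2*l*(1+t₀) < T →
      I t₀ + C₀ * (I t₀)^(1+α) * l^2/4 ≤ I (t₀ + 2*l*(1+t₀)) := by
    intro t₀ l h0 hl0 hl2 hT'
    have hMε : ε ≤ I t₀ := hIge t₀ h0 (by nlinarith)
    have hMpos : 0 < I t₀ := lt_of_lt_of_le hε hMε
    have h1t₀ : (0:ℝ) < 1 + t₀ := by linarith
    set h := l * (1+t₀) with hh
    have hh0 : 0 < h := mul_pos hl0 h1t₀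
    have hhl : l ≤ h := by nlinarith
    have ht₂ : t₀ + 2*l*(1+t₀) = t₀ + 2*h := by rw [hh]; ring
    rw [ht₂] at hT' ⊢
    set m := C₀ * (I t₀)^(1+α) * l / (4*(1+t₀)) with hm
    have hIpow : (0:ℝ) < C₀ * (I t₀)^(1+α) :=
      mul_pos hC₀ (Real.rpow_pos_of_pos hMpos _)
    have hmlb : ∀ x ∈ Icc (t₀ + h) (t₀ + 2*h), m ≤ I' x := by
      intro x hx
      have hxt₀ : t₀ ≤ x := by linarith [hx.1]
      have hxT : x < T := lt_of_le_of_lt hx.2 hT'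
      have hd := hderiv t₀ x h0 hxt₀ hxT
      have he1 : Real.exp (t₀ - x) ≤ Real.exp (-l) :=
        Real.exp_le_exp.mpr (by linarith [hx.1])
      have he2 : l/2 ≤ 1 - Real.exp (-l) := auxExp hl0.le (by linarith)
      have he3 : l/2 ≤ 1 - Real.exp (t₀ - x) := by linarith
      have h1x : 1 + x ≤ 2*(1+t₀) := by
        have : x ≤ t₀ + 2*h := hx.2
        have : 2*h ≤ 1 + t₀ := by rw [hh]; nlinarith
        linarith [hx.2]
      have h1x0 : (0:ℝ) < 1 + x := by linarith
      have hc1 : m ≤ C₀ * (I t₀)^(1+α) * (l/2) / (2*(1+t₀)) := by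
        rw [hm]
        apply le_of_eq; field_simp; ring
      have hc2 : C₀ * (I t₀)^(1+α) * (l/2) / (2*(1+t₀))
          ≤ C₀ * (I t₀)^(1+α) * (1 - Real.exp (t₀ - x)) / (1+x) := by
        apply div_le_div₀ (mul_nonneg hIpow.le (by linarith)) ?_ h1x0 h1x
        exact mul_le_mul_of_nonneg_left he3 hIpow.le
      linarith
    have hmono2 : MonotoneOn (fun x => I x - m * x) (Icc (t₀+h) (t₀+2*h)) := by
      apply auxMono _ (fun x => I' x - m)
      · intro x hx
        have hmem : x ∈ Ico (0:ℝ) T := ⟨by linarith [hx.1], lt_of_le_of_lt hx.2 hT'⟩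
        have hd2 : HasDerivAt (fun y : ℝ => m * y) m x := by
          simpa using (hasDerivAt_id x).const_mul m
        exact (hI x hmem).sub hd2
      · intro x hx
        have := hmlb x (Ioo_subset_Icc_self hx)
        linarith
    have h3 := hmono2 (left_mem_Icc.mpr (by linarith)) (right_mem_Icc.mpr (by linarith)) (by linarith)
    simp only at h3
    -- I (t₀+2h) ≥ I (t₀+h) + m * h
    have h4 : I (t₀+h) + m * h ≤ I (t₀+2*h) := by nlinarith [h3]
    have h5 : I t₀ ≤ I (t₀+h) := hIm t₀ (t₀+h) h0 (by linarith) (by linarith)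
    have h6 : m * h = C₀ * (I t₀)^(1+α) * l^2/4 := by
      rw [hm, hh]; field_simp
    linarith [h4, h5, h6.symm.le]
  -- constants
  have h2m : (2:ℝ)^(-(α/2)) < 1 :=
    Real.rpow_lt_one_of_one_lt_of_neg one_lt_two (by linarith)
  have h2mp : (0:ℝ) < (2:ℝ)^(-(α/2)) := Real.rpow_pos_of_pos two_pos _
  have hp : 0 < p := by rw [hp_def]; apply div_pos (by norm_num); linarith
  have hq : 0 < q := by
    rw [hq_def]
    exact div_pos (mul_pos (by norm_num) (Real.rpow_pos_of_pos two_pos _)) hα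
  have hεnegα : (0:ℝ) < ε^(-α) := Real.rpow_pos_of_pos hε _
  have hεα1 : (1:ℝ) ≤ ε^(-α) := by
    have := Real.rpow_le_rpow_of_exponent_ge hε hε1 (show -α ≤ 0 by linarith)
    simpa [Real.rpow_zero] using this
  have hPsiB : PsiF p q C₀ α ε ≤ (a - 1) * ε^(-α) := by
    calc PsiF p q C₀ α ε ≤ (p / Real.sqrt C₀ + q / C₀) * ε^(-α) :=
          auxPsiBound p q C₀ α ε hC₀ hα hp hq hε hε1
      _ = (a-1) * ε^(-α) := by rw [ha_def]; ring
  have haε : PsiF p q C₀ α ε + 1 ≤ a * ε^(-α) := by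
    have e : a*ε^(-α) = (a-1)*ε^(-α) + ε^(-α) := by ring
    linarith
  set γ := ε * min (C₀*ε^α/16) 1 with hγ_def
  have hγ0 : 0 < γ := by
    apply mul_pos hε (lt_min _ one_pos)
    have : (0:ℝ) < ε^α := Real.rpow_pos_of_pos hε α
    positivity
  have hδmono : ∀ M, ε ≤ M → γ ≤ M * min (C₀*M^α/16) 1 := by
    intro M hM
    rw [hγ_def]
    have hεα : (0:ℝ) < ε^α := Real.rpow_pos_of_pos hε α
    apply mul_le_mul hM (min_le_min _ le_rfl) (le_min (by positivity) zero_le_one) (by linarith)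
    have : ε^α ≤ M^α := Real.rpow_le_rpow hε.le hM hα.le
    apply div_le_div_of_nonneg_right ?_ (by norm_num)
    exact mul_le_mul_of_nonneg_left this hC₀.le
  -- main induction
  have hmain : ∀ k : ℕ, ∃ u, 0 ≤ u ∧ u < T ∧
      Real.log (1+u) + PsiF p q C₀ α (I u) ≤ PsiF p q C₀ α ε ∧ ε + k * γ ≤ I u := by
    intro k
    induction k with
    | zero =>
      refine ⟨0, le_rfl, hT0, ?_, ?_⟩
      · simp [hI0, Real.log_one]
      · simp [hI0]
    | succ k ih =>
      obtain ⟨u, hu0, huT, hlog, hlow⟩ := ih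
      have hkγ : (0:ℝ) ≤ (k:ℝ) * γ := by positivity
      have hMε : ε ≤ I u := by linarith
      have hM0 : 0 < I u := lt_of_lt_of_le hε hMε
      obtain ⟨hl0, hl2⟩ := auxLamPos C₀ α (I u) hC₀ hM0
      have h1u : (0:ℝ) < 1 + u := by linarith
      set u' := u + 2*(lamF C₀ α (I u))*(1+u) with hu'_def
      have h1u' : 1 + u' = (1+u)*(1+2*(lamF C₀ α (I u))) := by rw [hu'_def]; ring
      have hu'0 : (0:ℝ) ≤ u' := by nlinarith
      have hPsiM : 0 ≤ PsiF p q C₀ α (I u) := auxPsiNonneg p q C₀ α hC₀ hα hp hq hM0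
      have hlogstep : Real.log (1+u') ≤ Real.log (1+u) + 2*(lamF C₀ α (I u)) := by
        have h12l : (0:ℝ) < 1+2*(lamF C₀ α (I u)) := by linarith
        rw [h1u', Real.log_mul (ne_of_gt h1u) (ne_of_gt h12l)]
        have := Real.log_le_sub_one_of_pos h12l
        linarith
      have hlogu' : Real.log (1+u') ≤ a * ε^(-α) := by
        have h5 : Real.log (1+u) ≤ PsiF p q C₀ α ε := by linarith
        linarith [haε]
      have hu'T : u' < T := by
        have h4 := Real.exp_le_exp.mpr hlogu'
        rw [Real.exp_log (by linarith : (0:ℝ) < 1+u')] at h4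
        linarith [hTgt]
      have hgain := hstep u (lamF C₀ α (I u)) hu0 hl0 hl2 (hu'_def ▸ hu'T)
      rw [← hu'_def] at hgain
      have hkey' := auxKey C₀ α p q hC₀ hα hp_def hq_def hM0 hgain
      refine ⟨u', hu'0, hu'T, ?_, ?_⟩
      · linarith [hlogstep, hlog, hkey']
      · have hδ2 : γ ≤ C₀*(I u)^(1+α)*(lamF C₀ α (I u))^2/4 := by
          rw [auxDeltaEq C₀ α (I u) hC₀ hM0]
          exact hδmono (I u) hMε
        push_cast
        linarith [hgain, hδ2, hlow]
  -- conclusion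
  set w := Real.exp (a*ε^(-α)) - 1 with hw_def
  have ha0 : 0 < a := by
    have h1 : (0:ℝ) < Real.sqrt C₀ := Real.sqrt_pos.mpr hC₀
    rw [ha_def]; positivity
  have hw0 : (0:ℝ) ≤ w := by
    have h1 : (0:ℝ) ≤ a*ε^(-α) := by positivity
    have := Real.add_one_le_exp (a*ε^(-α))
    rw [hw_def]; linarith
  have hwT : w < T := by rw [hw_def]; linarith [hTgt]
  obtain ⟨k, hk⟩ := exists_nat_gt ((I w - ε)/γ)
  obtain ⟨u, hu0, huT, hlog, hlow⟩ := hmain k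
  have hkγ : (0:ℝ) ≤ (k:ℝ) * γ := by positivity
  have hM0 : 0 < I u := by nlinarith
  have hPsiM : 0 ≤ PsiF p q C₀ α (I u) := auxPsiNonneg p q C₀ α hC₀ hα hp hq hM0
  have hlogw : Real.log (1+u) ≤ a*ε^(-α) := by
    have e : a*ε^(-α) = (a-1)*ε^(-α) + ε^(-α) := by ring
    linarith [hPsiB]
  have huw : u ≤ w := by
    have h4 := Real.exp_le_exp.mpr hlogw
    rw [Real.exp_log (by linarith : (0:ℝ) < 1+u)] at h4
    rw [hw_def]; linarith
  have hIuw : I u ≤ I w := hIm u w hu0 huw hwT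
  rw [div_lt_iff₀ hγ0] at hk
  linarith [hlow, hIuw, hk]


/-- Blow-up ODE lemma, critical case `β = 1`: if `I` is twice differentiable on `[0,T)`
with `I(0) = ε > 0` small, `I'(0) ≥ 0`, and `I'' + I' ≥ C₀ I^{1+α}/(1+t)` on `[0,T)`,
then `I` cannot exist on an interval longer than `exp(a ε^{-α})`; in particular it blows
up in finite time, with lifespan `T(ε) ≤ exp(a ε^{-α})` for a constant `a > 0`
independent of `ε`. -/
theorem ode_blowup_critical (C₀ α : ℝ) (hC₀ : 0 < C₀) (hα : 0 < α) :
    ∃ a : ℝ, 0 < a ∧ ∃ ε₀ : ℝ, 0 < ε₀ ∧ ∀ ε : ℝ, 0 < ε → ε ≤ ε₀ →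
      ∀ (T : ℝ) (I I' I'' : ℝ → ℝ),
        (∀ t ∈ Ico (0 : ℝ) T, HasDerivAt I (I' t) t) →
        (∀ t ∈ Ico (0 : ℝ) T, HasDerivAt I' (I'' t) t) →
        I 0 = ε → 0 ≤ I' 0 →
        (∀ t ∈ Ico (0 : ℝ) T, C₀ * I t ^ (1 + α) / (1 + t) ≤ I'' t + I' t) →
        T ≤ Real.exp (a * ε ^ (-α)) := by
  have h2m : (2:ℝ)^(-(α/2)) < 1 :=
    Real.rpow_lt_one_of_one_lt_of_neg one_lt_two (by linarith)
  set p : ℝ := 4 / (1 - (2:ℝ)^(-(α/2))) with hp_def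
  set q : ℝ := 16*(2:ℝ)^(1+α)/α with hq_def
  set a : ℝ := p / Real.sqrt C₀ + q / C₀ + 1 with ha_def
  have hp : 0 < p := by rw [hp_def]; apply div_pos (by norm_num); linarith
  have hq : 0 < q := by
    rw [hq_def]
    exact div_pos (mul_pos (by norm_num) (Real.rpow_pos_of_pos two_pos _)) hα
  have hsC : (0:ℝ) < Real.sqrt C₀ := Real.sqrt_pos.mpr hC₀
  have ha0 : 0 < a := by rw [ha_def]; positivity
  refine ⟨a, ha0, 1, one_pos, ?_⟩
  intro ε hε hε1 T I I' I'' hI hI' hI0 hI'0 hineq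
  by_contra hT
  push_neg at hT
  exact blowup_aux C₀ α hC₀ hα ε hε hε1 T I I' I'' hI hI' hI0 hI'0 hineq
    p q a hp_def hq_def ha_def hT
end

section
/- Blow-up ODE lemma (subcritical case 0 ≤ β < 1): Let C₀ > 0, α > 0, 0 ≤ β < 1, and let I satisfy I″(t) + I′(t) ≥ C₀ I(t)^{1+α}/(1+t)^β with I(0) = ε > 0 and I′(0) ≥ 0. Then I blows up in finite time, and the lifespan satisfies T(ε) ≤ b ε^{-α/(1-β)} for some constant b > 0 independent of ε. -/
open Real Set

/-- Monotonicity from `HasDerivAt` with nonnegative derivative. -/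
lemma ode_mono_aux {f f' : ℝ → ℝ} {a b : ℝ} (hab : a ≤ b)
    (hd : ∀ t ∈ Icc a b, HasDerivAt f (f' t) t)
    (h0 : ∀ t ∈ Ioo a b, 0 ≤ f' t) : f a ≤ f b := by
  have hmono : MonotoneOn f (Icc a b) := by
    apply monotoneOn_of_deriv_nonneg (convex_Icc a b)
    · exact fun t ht => (hd t ht).continuousAt.continuousWithinAt
    · intro t ht
      rw [interior_Icc] at ht
      exact (hd t (Ioo_subset_Icc_self ht)).differentiableAt.differentiableWithinAt
    · intro t ht
      rw [interior_Icc] at ht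
      rw [(hd t (Ioo_subset_Icc_self ht)).deriv]
      exact h0 t ht
  exact hmono (left_mem_Icc.2 hab) (right_mem_Icc.2 hab) hab

/-- Subadditivity of `x ↦ x ^ q` for `0 ≤ q ≤ 1`. -/
lemma ode_subadd {x y q : ℝ} (hx : 0 ≤ x) (hy : 0 ≤ y) (h0 : 0 ≤ q) (h1 : q ≤ 1) :
    (x + y) ^ q ≤ x ^ q + y ^ q := by
  have h := NNReal.rpow_add_le_add_rpow x.toNNReal y.toNNReal h0 h1
  have h2 := NNReal.coe_le_coe.2 h
  push_cast [NNReal.coe_rpow, Real.coe_toNNReal x hx, Real.coe_toNNReal y hy] at h2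
  simpa using h2

/-- `δ/3 ≤ 1 - exp (-δ)` for `0 ≤ δ ≤ 1`. -/
lemma ode_exp_aux {δ : ℝ} (h0 : 0 ≤ δ) (h1 : δ ≤ 1) : δ / 3 ≤ 1 - Real.exp (-δ) := by
  have hE : 1 + δ ≤ Real.exp δ := by linarith [Real.add_one_le_exp δ]
  have hEpos : 0 < Real.exp δ := Real.exp_pos δ
  rw [Real.exp_neg]
  have key : (1 - δ/3) * Real.exp δ ≥ 1 := by nlinarith
  have h3 : (Real.exp δ)⁻¹ ≤ 1 - δ/3 := by
    rw [inv_le_iff_one_le_mul₀ hEpos] at *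
    · linarith [key]
  linarith

/-- Step A: `I` stays above `ε` on `[0, T)`. -/
lemma ode_stepA {C₀ α β ε T : ℝ} {I I' I'' : ℝ → ℝ}
    (hC₀ : 0 < C₀) (hε : 0 < ε)
    (hd1 : ∀ t ∈ Ico (0 : ℝ) T, HasDerivAt I (I' t) t)
    (hd2 : ∀ t ∈ Ico (0 : ℝ) T, HasDerivAt I' (I'' t) t)
    (hI0 : I 0 = ε) (hI'0 : 0 ≤ I' 0)
    (hODE : ∀ t ∈ Ico (0 : ℝ) T, C₀ * I t ^ (1 + α) / (1 + t) ^ β ≤ I'' t + I' t) :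
    ∀ t, 0 ≤ t → t < T → ε ≤ I t := by
  intro t₁ ht₁0 ht₁T
  by_contra hcon
  push_neg at hcon
  set μ := max (I t₁) (ε / 2) with hμdef
  have hμε : μ < ε := max_lt hcon (by linarith)
  have hμpos : 0 < μ := lt_of_lt_of_le (by linarith) (le_max_right _ _)
  set A := Icc (0:ℝ) t₁ ∩ I ⁻¹' Iic μ with hAdef
  have hIcont : ContinuousOn I (Icc 0 t₁) := fun t ht =>
    (hd1 t ⟨ht.1, lt_of_le_of_lt ht.2 ht₁T⟩).continuousAt.continuousWithinAt
  have hAclosed : IsClosed A :=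
    hIcont.preimage_isClosed_of_isClosed isClosed_Icc isClosed_Iic
  have hAne : A.Nonempty := ⟨t₁, ⟨⟨ht₁0, le_refl _⟩, show I t₁ ≤ μ from le_max_left _ _⟩⟩
  have hAbdd : BddBelow A := ⟨0, fun t ht => ht.1.1⟩
  set u := sInf A with hudef
  have huA : u ∈ A := hAclosed.csInf_mem hAne hAbdd
  have hu0 : 0 ≤ u := huA.1.1
  have hut₁ : u ≤ t₁ := huA.1.2
  have huT : u < T := lt_of_le_of_lt hut₁ ht₁T
  have huμ : I u ≤ μ := huA.2
  have hune : u ≠ 0 := by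
    intro h
    rw [h, hI0] at huμ
    linarith
  have hupos : 0 < u := lt_of_le_of_ne hu0 (Ne.symm hune)
  have hlow : ∀ t, 0 ≤ t → t < u → μ < I t := by
    intro t ht0 htu
    by_contra h
    push_neg at h
    have : t ∈ A := ⟨⟨ht0, le_trans htu.le hut₁⟩, h⟩
    exact absurd (csInf_le hAbdd this) (not_le.2 htu)
  have hI'nonneg : ∀ s, 0 ≤ s → s ≤ u → 0 ≤ I' s := by
    intro s hs0 hsu
    have hmem : ∀ t ∈ Icc (0:ℝ) s, t ∈ Ico (0:ℝ) T :=
      fun t ht => ⟨ht.1, lt_of_le_of_lt (le_trans ht.2 (le_trans hsu hut₁)) ht₁T⟩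
    have h := ode_mono_aux (f := fun t => Real.exp t * I' t)
        (f' := fun t => Real.exp t * I' t + Real.exp t * I'' t) hs0
        (fun t ht => (Real.hasDerivAt_exp t).mul (hd2 t (hmem t ht)))
        ?_
    · simp only [Real.exp_zero, one_mul] at h
      have := le_trans hI'0 h
      nlinarith [Real.exp_pos s]
    · intro t ht
      have htT : t ∈ Ico (0:ℝ) T := hmem t ⟨ht.1.le, ht.2.le⟩
      have hItpos : 0 < I t := lt_trans hμpos (hlow t ht.1.le (lt_of_lt_of_le ht.2 hsu))
      have hrhs : 0 ≤ C₀ * I t ^ (1 + α) / (1 + t) ^ β := by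
        apply div_nonneg (mul_nonneg hC₀.le (Real.rpow_nonneg hItpos.le _))
        exact Real.rpow_nonneg (by linarith [ht.1] : (0:ℝ) ≤ 1 + t) _
      have h2 := le_trans hrhs (hODE t htT)
      show 0 ≤ Real.exp t * I' t + Real.exp t * I'' t
      nlinarith [mul_nonneg (Real.exp_pos t).le h2]
  have h := ode_mono_aux (f := I) (f' := I') hu0
      (fun t ht => hd1 t ⟨ht.1, lt_of_le_of_lt ht.2 huT⟩)
      (fun t ht => hI'nonneg t ht.1.le ht.2.le)
  rw [hI0] at h
  linarith

/-- The right-hand side is nonnegative once `I ≥ ε > 0`. -/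
lemma ode_rhs_nonneg {C₀ α β ε T : ℝ} {I I' I'' : ℝ → ℝ}
    (hC₀ : 0 < C₀) (hε : 0 < ε)
    (hODE : ∀ t ∈ Ico (0 : ℝ) T, C₀ * I t ^ (1 + α) / (1 + t) ^ β ≤ I'' t + I' t)
    (hA : ∀ t, 0 ≤ t → t < T → ε ≤ I t) :
    ∀ t, 0 ≤ t → t < T → 0 ≤ I'' t + I' t := by
  intro t ht0 htT
  refine le_trans ?_ (hODE t ⟨ht0, htT⟩)
  apply div_nonneg (mul_nonneg hC₀.le (Real.rpow_nonneg (by linarith [hA t ht0 htT]) _))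
  exact Real.rpow_nonneg (by linarith) _

/-- Step B: `I' ≥ 0` on `[0, T)`. -/
lemma ode_stepB {C₀ α β ε T : ℝ} {I I' I'' : ℝ → ℝ}
    (hC₀ : 0 < C₀) (hε : 0 < ε)
    (hd2 : ∀ t ∈ Ico (0 : ℝ) T, HasDerivAt I' (I'' t) t)
    (hI'0 : 0 ≤ I' 0)
    (hODE : ∀ t ∈ Ico (0 : ℝ) T, C₀ * I t ^ (1 + α) / (1 + t) ^ β ≤ I'' t + I' t)
    (hA : ∀ t, 0 ≤ t → t < T → ε ≤ I t) :
    ∀ t, 0 ≤ t → t < T → 0 ≤ I' t := by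
  intro s hs0 hsT
  have h := ode_mono_aux (f := fun t => Real.exp t * I' t)
      (f' := fun t => Real.exp t * I' t + Real.exp t * I'' t) hs0
      (fun t ht => (Real.hasDerivAt_exp t).mul (hd2 t ⟨ht.1, lt_of_le_of_lt ht.2 hsT⟩))
      (fun t ht => by
        have h2 := ode_rhs_nonneg hC₀ hε hODE hA t ht.1.le (lt_trans ht.2 hsT)
        show 0 ≤ Real.exp t * I' t + Real.exp t * I'' t
        nlinarith [mul_nonneg (Real.exp_pos t).le h2])
  simp only [Real.exp_zero, one_mul] at h
  nlinarith [Real.exp_pos s, le_trans hI'0 h]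

/-- Step C: `I` is monotone on `[0, T)`. -/
lemma ode_stepC {T : ℝ} {I I' : ℝ → ℝ}
    (hd1 : ∀ t ∈ Ico (0 : ℝ) T, HasDerivAt I (I' t) t)
    (hB : ∀ t, 0 ≤ t → t < T → 0 ≤ I' t) :
    ∀ a b, 0 ≤ a → a ≤ b → b < T → I a ≤ I b := by
  intro a b ha0 hab hbT
  exact ode_mono_aux hab
    (fun t ht => hd1 t ⟨le_trans ha0 ht.1, lt_of_le_of_lt ht.2 hbT⟩)
    (fun t ht => hB t (le_trans ha0 ht.1.le) (lt_trans ht.2 hbT))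

/-- Step D: `K = I + I'` is monotone on `[0, T)`. -/
lemma ode_stepD {C₀ α β ε T : ℝ} {I I' I'' : ℝ → ℝ}
    (hC₀ : 0 < C₀) (hε : 0 < ε)
    (hd1 : ∀ t ∈ Ico (0 : ℝ) T, HasDerivAt I (I' t) t)
    (hd2 : ∀ t ∈ Ico (0 : ℝ) T, HasDerivAt I' (I'' t) t)
    (hODE : ∀ t ∈ Ico (0 : ℝ) T, C₀ * I t ^ (1 + α) / (1 + t) ^ β ≤ I'' t + I' t)
    (hA : ∀ t, 0 ≤ t → t < T → ε ≤ I t) :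
    ∀ a b, 0 ≤ a → a ≤ b → b < T → I a + I' a ≤ I b + I' b := by
  intro a b ha0 hab hbT
  exact ode_mono_aux (f := fun t => I t + I' t) (f' := fun t => I' t + I'' t) hab
    (fun t ht => ((hd1 t ⟨le_trans ha0 ht.1, lt_of_le_of_lt ht.2 hbT⟩).add
      (hd2 t ⟨le_trans ha0 ht.1, lt_of_le_of_lt ht.2 hbT⟩)))
    (fun t ht => by
      have := ode_rhs_nonneg hC₀ hε hODE hA t (le_trans ha0 ht.1.le) (lt_trans ht.2 hbT)
      show 0 ≤ I' t + I'' t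
      linarith)

/-- Step E: growth of `K = I + I'`. -/
lemma ode_stepE {C₀ α β T : ℝ} {I I' I'' : ℝ → ℝ}
    (hC₀ : 0 < C₀) (hα : 0 < α) (hβ1 : β < 1)
    (hd1 : ∀ t ∈ Ico (0 : ℝ) T, HasDerivAt I (I' t) t)
    (hd2 : ∀ t ∈ Ico (0 : ℝ) T, HasDerivAt I' (I'' t) t)
    (hODE : ∀ t ∈ Ico (0 : ℝ) T, C₀ * I t ^ (1 + α) / (1 + t) ^ β ≤ I'' t + I' t)
    (a c M : ℝ) (ha0 : 0 ≤ a) (hac : a ≤ c) (hcT : c < T) (hM : 0 < M)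
    (hIM : ∀ t, a ≤ t → t ≤ c → M ≤ I t) :
    (I a + I' a) + (C₀ / (1 - β)) * M ^ (1 + α) * ((1 + c) ^ (1 - β) - (1 + a) ^ (1 - β))
      ≤ I c + I' c := by
  have hp : (0:ℝ) < 1 - β := by linarith
  have h := ode_mono_aux
      (f := fun t => (I t + I' t) - (C₀ / (1 - β)) * M ^ (1 + α) * (1 + t) ^ (1 - β))
      (f' := fun t => (I' t + I'' t)
        - (C₀ / (1 - β)) * M ^ (1 + α) * (1 * (1 - β) * (1 + t) ^ (1 - β - 1))) hac
      (fun t ht => by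
        have ht0 : (0:ℝ) ≤ t := le_trans ha0 ht.1
        have h1t : (0:ℝ) < 1 + t := by linarith
        have hid : HasDerivAt (fun t : ℝ => 1 + t) 1 t := by
          simpa using (hasDerivAt_id t).const_add (1:ℝ)
        have hder : HasDerivAt (fun t : ℝ => (1 + t) ^ (1 - β))
            (1 * (1 - β) * (1 + t) ^ (1 - β - 1)) t := hid.rpow_const (Or.inl h1t.ne')
        exact ((hd1 t ⟨ht0, lt_of_le_of_lt ht.2 hcT⟩).add
          (hd2 t ⟨ht0, lt_of_le_of_lt ht.2 hcT⟩)).sub (hder.const_mul _))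
      (fun t ht => by
        have ht0 : (0:ℝ) ≤ t := le_trans ha0 ht.1.le
        have htT : t < T := lt_trans ht.2 hcT
        have h1t : (0:ℝ) < 1 + t := by linarith
        have hODEt := hODE t ⟨ht0, htT⟩
        have hcomp : M ^ (1 + α) ≤ I t ^ (1 + α) :=
          Real.rpow_le_rpow hM.le (hIM t ht.1.le ht.2.le) (by linarith)
        have hbpos : (0:ℝ) < (1 + t) ^ β := Real.rpow_pos_of_pos h1t β
        have key : C₀ * M ^ (1 + α) / (1 + t) ^ β ≤ I'' t + I' t :=
          le_trans (div_le_div_of_nonneg_right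
            (mul_le_mul_of_nonneg_left hcomp hC₀.le) hbpos.le) hODEt
        have heq : (C₀ / (1 - β)) * M ^ (1 + α) * (1 * (1 - β) * (1 + t) ^ (1 - β - 1))
            = C₀ * M ^ (1 + α) / (1 + t) ^ β := by
          have h2 : (1 + t) ^ (1 - β - 1) = ((1 + t) ^ β)⁻¹ := by
            rw [show (1 - β - 1 : ℝ) = -β by ring, Real.rpow_neg h1t.le]
          rw [h2]
          field_simp
        show 0 ≤ (I' t + I'' t)
          - (C₀ / (1 - β)) * M ^ (1 + α) * (1 * (1 - β) * (1 + t) ^ (1 - β - 1))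
        rw [heq]
        linarith)
  linarith

/-- Step F: from `K` to `I`. -/
lemma ode_stepF {T : ℝ} {I I' : ℝ → ℝ}
    (hd1 : ∀ t ∈ Ico (0 : ℝ) T, HasDerivAt I (I' t) t)
    (hKmono : ∀ a b, 0 ≤ a → a ≤ b → b < T → I a + I' a ≤ I b + I' b)
    (a c : ℝ) (ha0 : 0 ≤ a) (hac : a ≤ c) (hcT : c < T) (hIa : 0 ≤ I a) :
    (I a + I' a) * (1 - Real.exp (a - c)) ≤ I c := by
  set K := I a + I' a with hK
  have h := ode_mono_aux
      (f := fun t => Real.exp t * I t - K * Real.exp t)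
      (f' := fun t => (Real.exp t * I' t + Real.exp t * I t) - K * Real.exp t) hac
      (fun t ht => by
        have ht0 : (0:ℝ) ≤ t := le_trans ha0 ht.1
        have h1 := (Real.hasDerivAt_exp t).mul (hd1 t ⟨ht0, lt_of_le_of_lt ht.2 hcT⟩)
        have h2 := (Real.hasDerivAt_exp t).const_mul K
        have := h1.sub h2
        exact this.congr_deriv (by ring))
      (fun t ht => by
        have ht0 : (0:ℝ) ≤ t := le_trans ha0 ht.1.le
        have htT : t < T := lt_trans ht.2 hcT
        have hKt := hKmono a t ha0 ht.1.le htT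
        show 0 ≤ (Real.exp t * I' t + Real.exp t * I t) - K * Real.exp t
        nlinarith [Real.exp_pos t, mul_le_mul_of_nonneg_left hKt (Real.exp_pos t).le])
  have hec : (0:ℝ) < Real.exp c := Real.exp_pos c
  have h2 : K * (Real.exp c - Real.exp a) ≤ Real.exp c * I c := by
    nlinarith [mul_nonneg (Real.exp_pos a).le hIa]
  have h3 : Real.exp (a - c) = Real.exp a / Real.exp c := Real.exp_sub a c
  rw [h3]
  rw [show K * (1 - Real.exp a / Real.exp c) = K * (Real.exp c - Real.exp a) / Real.exp c by
    field_simp]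
  rw [div_le_iff₀ hec]
  nlinarith [h2]

set_option maxHeartbeats 1600000 in
/-- Blow-up ODE lemma, subcritical case `0 ≤ β < 1`: if `I` is twice differentiable on
`[0,T)` with `I(0) = ε > 0` small, `I'(0) ≥ 0`, and
`I'' + I' ≥ C₀ I^{1+α}/(1+t)^β` on `[0,T)`, then `I` blows up in finite time and the
lifespan satisfies `T(ε) ≤ b ε^{-α/(1-β)}` for a constant `b > 0` independent of `ε`. -/
theorem ode_blowup_subcritical (C₀ α β : ℝ) (hC₀ : 0 < C₀) (hα : 0 < α)
    (hβ0 : 0 ≤ β) (hβ1 : β < 1) :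
    ∃ b : ℝ, 0 < b ∧ ∃ ε₀ : ℝ, 0 < ε₀ ∧ ∀ ε : ℝ, 0 < ε → ε ≤ ε₀ →
      ∀ (T : ℝ) (I I' I'' : ℝ → ℝ),
        (∀ t ∈ Ico (0 : ℝ) T, HasDerivAt I (I' t) t) →
        (∀ t ∈ Ico (0 : ℝ) T, HasDerivAt I' (I'' t) t) →
        I 0 = ε → 0 ≤ I' 0 →
        (∀ t ∈ Ico (0 : ℝ) T, C₀ * I t ^ (1 + α) / (1 + t) ^ β ≤ I'' t + I' t) →
        T ≤ b * ε ^ (-α / (1 - β)) := by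
  have hq : (0:ℝ) < 1 - β := by linarith
  set θ : ℝ := (2:ℝ) ^ (-(α/2)) with hθdef
  have hθ0 : 0 < θ := Real.rpow_pos_of_pos two_pos _
  have hθ1 : θ < 1 := Real.rpow_lt_one_of_one_lt_of_neg one_lt_two (by linarith)
  have hθq1 : θ ^ (1-β) < 1 := Real.rpow_lt_one hθ0.le hθ1 hq
  have hθq0 : 0 < θ ^ (1-β) := Real.rpow_pos_of_pos hθ0 _
  have h1θ : 0 < 1 - θ := by linarith
  have h1θq : 0 < 1 - θ ^ (1-β) := by linarith
  set Cc : ℝ := 1 + (6*(1-β)/C₀)/(1-θ) + 1/(1-θ^(1-β)) with hCcdef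
  have ha1nn : 0 ≤ (6*(1-β)/C₀)/(1-θ) := by positivity
  have ha2nn : 0 ≤ 1/(1-θ^(1-β)) := by positivity
  have hCc0 : (0:ℝ) < Cc := by rw [hCcdef]; linarith
  refine ⟨Cc ^ ((1-β)⁻¹), Real.rpow_pos_of_pos hCc0 _, 1, one_pos, ?_⟩
  intro ε hε hε1 T I I' I'' hd1 hd2 hI0 hI'0 hODE
  set b := Cc ^ ((1-β)⁻¹) with hbdef
  have hb : 0 < b := Real.rpow_pos_of_pos hCc0 _
  by_contra hT
  push_neg at hT
  set tb := b * ε ^ (-α/(1-β)) with htbdef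
  have hεα1 : 1 ≤ ε ^ (-α) := Real.one_le_rpow_of_pos_of_le_one_of_nonpos hε hε1 (by linarith)
  have hεα0 : 0 < ε ^ (-α) := Real.rpow_pos_of_pos hε _
  have htb0 : 0 < tb := mul_pos hb (Real.rpow_pos_of_pos hε _)
  have htbT : tb < T := hT
  have hA := ode_stepA hC₀ hε hd1 hd2 hI0 hI'0 hODE
  have hB := ode_stepB hC₀ hε hd2 hI'0 hODE hA
  have hCmono := ode_stepC hd1 hB
  have hD := ode_stepD hC₀ hε hd1 hd2 hODE hA
  set B : ℝ := 6*(1-β)/C₀ * ε^(-α) with hBdef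
  have hBpos : 0 < B := by rw [hBdef]; positivity
  set R : ℕ → ℝ := fun k => (B/(1-θ)) * θ^k + (θ^(1-β))^k / (1-θ^(1-β)) with hRdef
  have hR0 : ∀ k, 0 ≤ R k := fun k => by
    rw [hRdef]
    have h1 : (0:ℝ) ≤ (B/(1-θ)) * θ^k := by positivity
    have h2 : (0:ℝ) ≤ (θ^(1-β))^k / (1-θ^(1-β)) := by positivity
    simpa using add_nonneg h1 h2
  have hRrec : ∀ k : ℕ, R k = R (k+1) + B*θ^k + (θ^(1-β))^k := by
    intro k
    simp only [hRdef, pow_succ]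
    field_simp
    ring
  set Cε := Cc * ε^(-α) with hCεdef
  have htbq : Cε ≤ (1+tb)^(1-β) := by
    have h1 : b^(1-β) = Cc := by
      rw [hbdef, ← Real.rpow_mul hCc0.le, inv_mul_cancel₀ hq.ne', Real.rpow_one]
    have h2 : (ε ^ (-α/(1-β)))^(1-β) = ε^(-α) := by
      rw [← Real.rpow_mul hε.le, div_mul_cancel₀ _ hq.ne']
    have h3 : tb^(1-β) = Cε := by
      rw [htbdef, Real.mul_rpow hb.le (Real.rpow_nonneg hε.le _), h1, h2, hCεdef]
    rw [← h3]
    exact Real.rpow_le_rpow htb0.le (by linarith) hq.le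
  have hbound : ∀ τ, 0 ≤ τ → (1+τ)^(1-β) ≤ Cε → τ ≤ tb := by
    intro τ hτ0 hτq
    by_contra h
    push_neg at h
    have := Real.rpow_lt_rpow (by linarith : (0:ℝ) ≤ 1+tb) (by linarith : 1+tb < 1+τ) hq
    linarith
  have hθ2 : θ^2 * (2:ℝ)^α = 1 := by
    have h1 : θ^2 = (2:ℝ)^(-α) := by
      rw [hθdef, ← Real.rpow_mul_natCast (by norm_num : (0:ℝ) ≤ 2)]
      norm_num
    rw [h1, ← Real.rpow_add two_pos]
    norm_num
  have P : ∀ k : ℕ, ∃ τ, 0 ≤ τ ∧ (1+τ)^(1-β) + R k ≤ Cε ∧ (2:ℝ)^k * ε ≤ I τ := by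
    intro k
    induction k with
    | zero =>
      refine ⟨0, le_refl _, ?_, by simp [hI0]⟩
      have e1 : ((1:ℝ)+0)^(1-β) = 1 := by norm_num [Real.one_rpow]
      rw [e1]
      simp only [hRdef, pow_zero, one_mul]
      rw [hCεdef, hCcdef, hBdef]
      have ha1 : (6*(1-β)/C₀*ε^(-α))/(1-θ) = (6*(1-β)/C₀)/(1-θ) * ε^(-α) := by ring
      rw [ha1]
      nlinarith [mul_nonneg ha2nn (sub_nonneg.2 hεα1), mul_nonneg ha1nn (sub_nonneg.2 hεα1)]
    | succ k ih =>
      obtain ⟨τ, hτ0, hinv, hIτ⟩ := ih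
      set M := (2:ℝ)^k * ε with hMdef
      have hM : 0 < M := by rw [hMdef]; positivity
      set δ := θ^k with hδdef
      have hδ0 : 0 < δ := pow_pos hθ0 k
      have hδ1 : δ ≤ 1 := pow_le_one₀ hθ0.le hθ1.le
      set Δ := B * θ^k with hΔdef
      have hΔ : 0 < Δ := mul_pos hBpos (pow_pos hθ0 k)
      set σ := ((1+τ)^(1-β) + Δ)^((1-β)⁻¹) - 1 with hσdef
      have hsΔ0 : (0:ℝ) ≤ (1+τ)^(1-β) + Δ :=
        add_nonneg (Real.rpow_nonneg (by linarith) _) hΔ.le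
      have h1σ : 1 + σ = ((1+τ)^(1-β) + Δ)^((1-β)⁻¹) := by rw [hσdef]; ring
      have hσq : (1+σ)^(1-β) = (1+τ)^(1-β) + Δ := by
        rw [h1σ, ← Real.rpow_mul hsΔ0, inv_mul_cancel₀ hq.ne', Real.rpow_one]
      have hτσ : τ ≤ σ := by
        have e : ((1+τ)^(1-β))^((1-β)⁻¹) = 1+τ := by
          rw [← Real.rpow_mul (by linarith : (0:ℝ) ≤ 1+τ), mul_inv_cancel₀ hq.ne',
            Real.rpow_one]
        have h : ((1+τ)^(1-β))^((1-β)⁻¹) ≤ ((1+τ)^(1-β) + Δ)^((1-β)⁻¹) :=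
          Real.rpow_le_rpow (Real.rpow_nonneg (by linarith : (0:ℝ) ≤ 1+τ) _)
            (le_add_of_nonneg_right hΔ.le) (inv_nonneg.2 hq.le)
        rw [e, ← h1σ] at h
        linarith
      have hσ0 : 0 ≤ σ := le_trans hτ0 hτσ
      set τ' := σ + δ with hτ'def
      have hδq : δ ^ (1-β) = (θ^(1-β))^k := by
        rw [hδdef, ← Real.rpow_natCast_mul hθ0.le k (1-β), mul_comm (k:ℝ) (1-β),
          Real.rpow_mul_natCast hθ0.le]
      have hsub : (1+τ')^(1-β) ≤ (1+τ)^(1-β) + Δ + (θ^(1-β))^k := by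
        have h := ode_subadd (x := 1+σ) (y := δ) (by linarith) hδ0.le hq.le (by linarith)
        calc (1+τ')^(1-β) = ((1+σ)+δ)^(1-β) := by rw [hτ'def]; ring_nf
          _ ≤ (1+σ)^(1-β) + δ^(1-β) := h
          _ = (1+τ)^(1-β) + Δ + (θ^(1-β))^k := by rw [hσq, hδq]
      have hinv' : (1+τ')^(1-β) + R (k+1) ≤ Cε := by
        have hrec := hRrec k
        rw [hΔdef] at hsub
        linarith
      have hτ'tb : τ' ≤ tb := hbound τ' (by linarith) (by linarith [hR0 (k+1)])
      have hτ'T : τ' < T := lt_of_le_of_lt hτ'tb htbT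
      have hσT : σ < T := lt_of_le_of_lt (by linarith : σ ≤ τ') hτ'T
      have hτT : τ < T := lt_of_le_of_lt hτσ hσT
      have hIMτσ : ∀ t, τ ≤ t → t ≤ σ → M ≤ I t := fun t h1 h2 =>
        le_trans hIτ (hCmono τ t hτ0 h1 (lt_of_le_of_lt h2 hσT))
      have hE := ode_stepE hC₀ hα hβ1 hd1 hd2 hODE τ σ M hτ0 hτσ hσT hM hIMτσ
      have hKτ0 : 0 ≤ I τ + I' τ := by
        have h1 := hA τ hτ0 hτT
        have h2 := hB τ hτ0 hτT
        linarith
      have hKσ : (C₀/(1-β)) * M^(1+α) * Δ ≤ I σ + I' σ := by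
        rw [hσq] at hE
        have : (C₀/(1-β)) * M^(1+α) * ((1+τ)^(1-β) + Δ - (1+τ)^(1-β))
            = (C₀/(1-β)) * M^(1+α) * Δ := by ring
        rw [this] at hE
        linarith
      have hIσ0 : 0 ≤ I σ := by linarith [hA σ hσ0 hσT]
      have hF := ode_stepF hd1 hD σ τ' hσ0 (by linarith) hτ'T hIσ0
      have hexp : δ/3 ≤ 1 - Real.exp (σ - τ') := by
        have e : σ - τ' = -δ := by rw [hτ'def]; ring
        rw [e]
        exact ode_exp_aux hδ0.le hδ1
      have hX0 : 0 ≤ (C₀/(1-β)) * M^(1+α) * Δ :=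
        mul_nonneg (mul_nonneg (div_nonneg hC₀.le hq.le) (Real.rpow_nonneg hM.le _)) hΔ.le
      have hKσ0 : 0 ≤ I σ + I' σ := le_trans hX0 hKσ
      have hchain : (C₀/(1-β)) * M^(1+α) * Δ * (δ/3) ≤ I τ' := by
        calc (C₀/(1-β)) * M^(1+α) * Δ * (δ/3)
            ≤ (I σ + I' σ) * (δ/3) := mul_le_mul_of_nonneg_right hKσ (by positivity)
          _ ≤ (I σ + I' σ) * (1 - Real.exp (σ - τ')) :=
              mul_le_mul_of_nonneg_left hexp hKσ0
          _ ≤ I τ' := hF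
      have e1 : M^(1+α) = M * M^α := by rw [Real.rpow_add hM, Real.rpow_one]
      have e2 : M^α = ((2:ℝ)^α)^k * ε^α := by
        rw [hMdef, Real.mul_rpow (by positivity) hε.le]
        congr 1
        rw [← Real.rpow_natCast_mul (by norm_num : (0:ℝ) ≤ 2) k α, mul_comm (k:ℝ) α,
          Real.rpow_mul_natCast (by norm_num : (0:ℝ) ≤ 2)]
      have e3 : ((2:ℝ)^α)^k * θ^k * θ^k = 1 := by
        rw [← mul_pow, ← mul_pow]
        rw [show (2:ℝ)^α * θ * θ = θ^2 * (2:ℝ)^α by ring, hθ2, one_pow]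
      have e4 : ε^α * ε^(-α) = 1 := by
        rw [← Real.rpow_add hε, add_neg_cancel, Real.rpow_zero]
      have halg : (C₀/(1-β)) * M^(1+α) * Δ * (δ/3)
          = 2 * M * (((2:ℝ)^α)^k * θ^k * θ^k) * (ε^α * ε^(-α)) := by
        rw [e1, e2, hΔdef, hBdef, hδdef]
        field_simp
        ring
      rw [e3, e4] at halg
      refine ⟨τ', by linarith, hinv', ?_⟩
      have : (2:ℝ)^(k+1) * ε = (C₀/(1-β)) * M^(1+α) * Δ * (δ/3) := by
        rw [halg, hMdef]
        ring
      rw [this]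
      exact hchain
  obtain ⟨k, hk⟩ := pow_unbounded_of_one_lt (I tb / ε) one_lt_two
  obtain ⟨τ, hτ0, hinv, hIτ⟩ := P k
  have hτtb : τ ≤ tb := hbound τ hτ0 (by linarith [hR0 k])
  have h1 : I τ ≤ I tb := hCmono τ tb hτ0 hτtb htbT
  have h2 : (2:ℝ)^k * ε ≤ I tb := le_trans hIτ h1
  rw [div_lt_iff₀ hε] at hk
  linarith
end

section
/- If f, g ∈ L¹(ℝⁿ) are nonnegative, nontrivial (∫(f+g) > 0), then there exists t₁ > 0 and H₀ = 2^{-n/2}∫(f+g)dx > 0 such that H(t) > H₀/2 for all t > t₁, where H(t) is as defined from the Gaussian averages of f and g. -/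
open Real MeasureTheory Filter Topology

/-- If `f, g` are nonnegative, integrable, `f` compactly supported, and nontrivial
(`∫ (f+g) > 0`), then with `H₀ = 2^{-n/2} ∫ (f+g) > 0` there exists `t₁ > 0` such
that `H(t) > H₀/2` for all `t > t₁`, where `H` is the Gaussian-average functional. -/
theorem gaussian_average_eventually_large (n : ℕ) (hn : 1 ≤ n)
    (f g : EuclideanSpace ℝ (Fin n) → ℝ)
    (hf : Integrable f) (hg : Integrable g)
    (hf0 : ∀ x, 0 ≤ f x) (hg0 : ∀ x, 0 ≤ g x)
    (hfc : HasCompactSupport f)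
    (hpos : 0 < ∫ x : EuclideanSpace ℝ (Fin n), (f x + g x))
    (H : ℝ → ℝ)
    (hH : ∀ t : ℝ, H t =
      ((t + 1) / (2 * t + 1)) ^ ((n : ℝ) / 2) *
        ((1 - ((n : ℝ) / 2) / (4 * Real.pi * (2 * t + 1))) *
            (∫ x : EuclideanSpace ℝ (Fin n),
              Real.exp (-‖x‖ ^ 2 / (4 * (2 * t + 1))) * f x) +
          (∫ x : EuclideanSpace ℝ (Fin n),
            Real.exp (-‖x‖ ^ 2 / (4 * (2 * t + 1))) * f x *
              (‖x‖ ^ 2 / (4 * (2 * t + 1) ^ 2))) +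
          ∫ x : EuclideanSpace ℝ (Fin n),
            Real.exp (-‖x‖ ^ 2 / (4 * (2 * t + 1))) * g x)) :
    0 < (2 : ℝ) ^ (-(n : ℝ) / 2) * ∫ x : EuclideanSpace ℝ (Fin n), (f x + g x) ∧
    ∃ t₁ : ℝ, 0 < t₁ ∧ ∀ t : ℝ, t₁ < t →
      ((2 : ℝ) ^ (-(n : ℝ) / 2) * ∫ x : EuclideanSpace ℝ (Fin n), (f x + g x)) / 2
        < H t := by
  have h2 : (0:ℝ) < (2:ℝ) ^ (-(n:ℝ)/2) := Real.rpow_pos_of_pos two_pos _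
  have hH0 : 0 < (2:ℝ) ^ (-(n:ℝ)/2) * ∫ x : EuclideanSpace ℝ (Fin n), (f x + g x) :=
    mul_pos h2 hpos
  refine ⟨hH0, ?_⟩
  set H0 := (2:ℝ) ^ (-(n:ℝ)/2) * ∫ x : EuclideanSpace ℝ (Fin n), (f x + g x) with hH0def
  have hint : (∫ x : EuclideanSpace ℝ (Fin n), (f x + g x))
      = (∫ x, f x) + ∫ x, g x := integral_add hf hg
  -- denominator tends to infinity
  have hden : Tendsto (fun t : ℝ => 4 * (2 * t + 1)) atTop atTop := by
    have h1 : Tendsto (fun t : ℝ => 8 * t + 4) atTop atTop :=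
      tendsto_atTop_add_const_right atTop 4 (tendsto_id.const_mul_atTop (by norm_num))
    exact h1.congr (fun t => by ring)
  -- pointwise exponential convergence
  have hexp : ∀ x : EuclideanSpace ℝ (Fin n),
      Tendsto (fun t : ℝ => Real.exp (-‖x‖ ^ 2 / (4 * (2 * t + 1)))) atTop (𝓝 1) := by
    intro x
    have h0 : Tendsto (fun t : ℝ => -‖x‖ ^ 2 / (4 * (2 * t + 1))) atTop (𝓝 0) :=
      Tendsto.div_atTop tendsto_const_nhds hden
    have := (Real.continuous_exp.tendsto 0).comp h0
    rw [Real.exp_zero] at this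
    exact this
  -- dominated convergence for f and g
  have key : ∀ (φ : EuclideanSpace ℝ (Fin n) → ℝ), Integrable φ →
      Tendsto (fun t : ℝ => ∫ x : EuclideanSpace ℝ (Fin n),
        Real.exp (-‖x‖ ^ 2 / (4 * (2 * t + 1))) * φ x) atTop (𝓝 (∫ x, φ x)) := by
    intro φ hφ
    apply tendsto_integral_filter_of_dominated_convergence (fun x => |φ x|)
    · filter_upwards with t
      exact (Continuous.aestronglyMeasurable (by fun_prop)).mul hφ.aestronglyMeasurable
    · filter_upwards [eventually_ge_atTop (0:ℝ)] with t ht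
      apply ae_of_all
      intro x
      have hd : (0:ℝ) < 4 * (2 * t + 1) := by linarith
      have he : Real.exp (-‖x‖ ^ 2 / (4 * (2 * t + 1))) ≤ 1 := by
        rw [Real.exp_le_one_iff]
        apply div_nonpos_of_nonpos_of_nonneg
        · simpa using sq_nonneg ‖x‖
        · linarith
      rw [Real.norm_eq_abs, abs_mul, Real.abs_exp]
      calc Real.exp (-‖x‖ ^ 2 / (4 * (2 * t + 1))) * |φ x| ≤ 1 * |φ x| :=
            mul_le_mul_of_nonneg_right he (abs_nonneg _)
        _ = |φ x| := one_mul _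
    · exact hφ.abs
    · apply ae_of_all
      intro x
      simpa using (hexp x).mul_const (φ x)
  have hIf := key f hf
  have hIg := key g hg
  -- the error term tends to 0
  have hδ : Tendsto (fun t : ℝ => ((n:ℝ)/2) / (4 * Real.pi * (2 * t + 1))) atTop (𝓝 0) := by
    apply Tendsto.div_atTop tendsto_const_nhds
    have h1 := hden.const_mul_atTop Real.pi_pos
    exact h1.congr (fun t => by ring)
  -- prefactor tends to (1/2)^(n/2)
  have hpre : Tendsto (fun t : ℝ => (t+1)/(2*t+1)) atTop (𝓝 (1/2)) := by
    have h1 : Tendsto (fun t : ℝ => (1 + t⁻¹)/(2 + t⁻¹)) atTop (𝓝 ((1+0)/(2+0))) :=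
      Tendsto.div (tendsto_const_nhds.add tendsto_inv_atTop_zero)
        (tendsto_const_nhds.add tendsto_inv_atTop_zero) (by norm_num)
    have h2 : (fun t : ℝ => (1 + t⁻¹)/(2 + t⁻¹)) =ᶠ[atTop] fun t => (t+1)/(2*t+1) := by
      filter_upwards [eventually_gt_atTop (0:ℝ)] with t ht
      field_simp
    have h3 := h1.congr' h2
    norm_num at h3
    exact h3
  have hpreR : Tendsto (fun t : ℝ => ((t+1)/(2*t+1)) ^ ((n:ℝ)/2)) atTop
      (𝓝 ((1/2 : ℝ) ^ ((n:ℝ)/2))) :=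
    ((Real.continuousAt_rpow_const (1/2) ((n:ℝ)/2) (Or.inl (by norm_num))).tendsto).comp hpre
  have hpow_eq : ((1/2 : ℝ) : ℝ) ^ ((n:ℝ)/2) = (2:ℝ) ^ (-(n:ℝ)/2) := by
    rw [neg_div, Real.rpow_neg (by norm_num : (0:ℝ) ≤ 2), one_div,
      Real.inv_rpow (by norm_num : (0:ℝ) ≤ 2)]
  -- the lower bound function
  set L : ℝ → ℝ := fun t => ((t+1)/(2*t+1)) ^ ((n:ℝ)/2) *
      ((1 - ((n:ℝ)/2) / (4 * Real.pi * (2 * t + 1))) *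
        (∫ x : EuclideanSpace ℝ (Fin n), Real.exp (-‖x‖ ^ 2 / (4 * (2 * t + 1))) * f x) +
        ∫ x : EuclideanSpace ℝ (Fin n), Real.exp (-‖x‖ ^ 2 / (4 * (2 * t + 1))) * g x)
    with hLdef
  have hL : Tendsto L atTop (𝓝 H0) := by
    have hone : Tendsto (fun _ : ℝ => (1:ℝ)) atTop (𝓝 1) := tendsto_const_nhds
    have h := hpreR.mul (((hone.sub hδ).mul hIf).add hIg)
    have heq : ((1/2 : ℝ)) ^ ((n:ℝ)/2) * ((1 - 0) * (∫ x, f x) + ∫ x, g x) = H0 := by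
      rw [hpow_eq, hH0def, hint]; ring
    rw [heq] at h
    exact h
  -- H t ≥ L t for t > 0
  have hHL : ∀ t : ℝ, 0 < t → L t ≤ H t := by
    intro t ht
    rw [hH t, hLdef]
    have hM : 0 ≤ ∫ x : EuclideanSpace ℝ (Fin n),
        Real.exp (-‖x‖ ^ 2 / (4 * (2 * t + 1))) * f x * (‖x‖ ^ 2 / (4 * (2 * t + 1) ^ 2)) := by
      apply integral_nonneg
      intro x
      have := hf0 x
      positivity
    have hp : (0:ℝ) ≤ ((t+1)/(2*t+1)) ^ ((n:ℝ)/2) := by positivity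
    nlinarith [mul_nonneg hp hM]
  -- conclude
  have hev : ∀ᶠ t in atTop, H0 / 2 < L t :=
    hL.eventually (eventually_gt_nhds (by linarith))
  obtain ⟨a, ha⟩ := eventually_atTop.1 (hev.and (eventually_gt_atTop (0:ℝ)))
  refine ⟨max a 1, lt_of_lt_of_le one_pos (le_max_right a 1), ?_⟩
  intro t ht
  have hta : a ≤ t := le_trans (le_max_left a 1) ht.le
  obtain ⟨h1, h2t⟩ := ha t hta
  calc H0 / 2 < L t := h1
    _ ≤ H t := hHL t h2t
end

section
/- Lower bound on the forcing integral: let H : [0,∞) → ℝ be continuous and bounded with lim_{t→∞} H(t) = H₀ > 0, let C₀ > 0 and I(t) = C₀(1+t)^{-n/2-1} with n ≥ 1. Then for every ε > 0 there exist constants C₂ > 0 (independent of ε) and t₄ = t₄(ε) such that for all t ≥ t₄, J(t) := ∫₀ᵗ e^τ (ε H(τ) - I(τ)) dτ ≥ C₂ ε eᵗ. -/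
open Real MeasureTheory Filter Topology intervalIntegral

/-- Lower bound on the forcing integral: if `H` is continuous, bounded on `[0,∞)` with
`H(t) → H₀ > 0` as `t → ∞`, `C₀ > 0` and `I(t) = C₀(1+t)^{-n/2-1}`, then there is
`C₂ > 0` independent of `ε` such that for every `ε > 0` there is `t₄ = t₄(ε)` with
`J(t) = ∫₀ᵗ e^τ (ε H(τ) - I(τ)) dτ ≥ C₂ ε eᵗ` for all `t ≥ t₄`. -/
theorem forcing_integral_lower_bound (n : ℕ) (hn : 1 ≤ n) (H : ℝ → ℝ) (H₀ C₀ : ℝ)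
    (hHcont : ContinuousOn H (Set.Ici (0 : ℝ)))
    (hHbd : ∃ M : ℝ, ∀ t : ℝ, 0 ≤ t → |H t| ≤ M)
    (hHlim : Tendsto H atTop (𝓝 H₀)) (hH₀ : 0 < H₀) (hC₀ : 0 < C₀) :
    ∃ C₂ : ℝ, 0 < C₂ ∧ ∀ ε : ℝ, 0 < ε → ∃ t₄ : ℝ, ∀ t : ℝ, t₄ ≤ t →
      C₂ * ε * Real.exp t ≤
        ∫ τ in (0 : ℝ)..t,
          Real.exp τ * (ε * H τ - C₀ * (1 + τ) ^ (-(n : ℝ) / 2 - 1)) := by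
  obtain ⟨M, hM⟩ := hHbd
  have hM0 : 0 ≤ M := le_trans (abs_nonneg _) (hM 0 le_rfl)
  set p : ℝ := -(n : ℝ) / 2 - 1 with hp
  have hn1 : (1 : ℝ) ≤ n := by exact_mod_cast hn
  have hp1 : p ≤ -1 := by rw [hp]; linarith
  -- integrability helpers
  have hcontH : ∀ a b : ℝ, 0 ≤ a → 0 ≤ b →
      IntervalIntegrable (fun τ => Real.exp τ * H τ) volume a b := by
    intro a b ha hb
    apply ContinuousOn.intervalIntegrable
    exact Real.continuous_exp.continuousOn.mul
      (hHcont.mono (fun x hx => le_trans (le_inf ha hb) hx.1))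
  have hcontR : ∀ a b : ℝ, 0 ≤ a → 0 ≤ b →
      IntervalIntegrable (fun τ => Real.exp τ * (1 + τ) ^ p) volume a b := by
    intro a b ha hb
    apply ContinuousOn.intervalIntegrable
    refine Real.continuous_exp.continuousOn.mul ?_
    refine ContinuousOn.rpow_const ((continuous_const.add continuous_id).continuousOn) ?_
    intro x hx
    left
    have : (0 : ℝ) ≤ x := le_trans (le_inf ha hb) hx.1
    intro h; nlinarith [h]
  have hcexp : ∀ (a b c : ℝ), IntervalIntegrable (fun τ => Real.exp τ * c) volume a b :=
    fun a b c => (Real.continuous_exp.mul continuous_const).intervalIntegrable a b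
  refine ⟨H₀ / 4, by positivity, ?_⟩
  intro ε hε
  -- threshold T for H ≥ H₀/2
  obtain ⟨T₀, hT₀⟩ := eventually_atTop.mp
    (hHlim.eventually (eventually_ge_nhds (show H₀ / 2 < H₀ by linarith)))
  set T : ℝ := max T₀ 0 with hT
  have hT0 : (0 : ℝ) ≤ T := le_max_right _ _
  set K : ℝ := (M + H₀ / 2) * Real.exp T with hK
  -- tendsto facts
  have h1 : Tendsto (fun t : ℝ => Real.exp (-t)) atTop (𝓝 0) :=
    Real.tendsto_exp_atBot.comp tendsto_neg_atTop_atBot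
  have hhalf : Tendsto (fun t : ℝ => t / 2) atTop atTop :=
    tendsto_id.atTop_div_const two_pos
  have h2 : Tendsto (fun t : ℝ => Real.exp (-(t / 2))) atTop (𝓝 0) :=
    Real.tendsto_exp_atBot.comp (tendsto_neg_atTop_atBot.comp hhalf)
  have h3 : Tendsto (fun t : ℝ => C₀ / (1 + t / 2)) atTop (𝓝 0) :=
    Tendsto.div_atTop tendsto_const_nhds (tendsto_atTop_add_const_left atTop 1 hhalf)
  have htend : Tendsto
      (fun t : ℝ => ε * K * Real.exp (-t) + C₀ * Real.exp (-(t / 2)) + C₀ / (1 + t / 2))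
      atTop (𝓝 0) := by
    have := ((h1.const_mul (ε * K)).add (h2.const_mul C₀)).add h3
    simpa using this
  have hev : ∀ᶠ t in atTop,
      (ε * K * Real.exp (-t) + C₀ * Real.exp (-(t / 2)) + C₀ / (1 + t / 2) < ε * (H₀ / 4))
      ∧ T ≤ t :=
    (htend.eventually_lt_const (by positivity)).and (eventually_ge_atTop T)
  obtain ⟨t₄, ht₄⟩ := eventually_atTop.mp hev
  refine ⟨t₄, fun t ht => ?_⟩
  obtain ⟨hg, hTt⟩ := ht₄ t ht
  have ht0 : (0 : ℝ) ≤ t := le_trans hT0 hTt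
  have ht20 : (0 : ℝ) ≤ t / 2 := by linarith
  have ht2t : t / 2 ≤ t := by linarith
  set E : ℝ := Real.exp t with hE
  set S : ℝ := Real.exp (t / 2) with hS
  have hEpos : 0 < E := Real.exp_pos t
  have hSpos : 0 < S := Real.exp_pos _
  have hDpos : (0 : ℝ) < 1 + t / 2 := by linarith
  -- multiplied form of hg
  have e1 : Real.exp (-t) * E = 1 := by rw [hE, ← Real.exp_add]; simp
  have e2 : Real.exp (-(t / 2)) * E = S := by
    rw [hE, hS, ← Real.exp_add]; congr 1; ring
  have hg' : ε * K + C₀ * S + C₀ * E / (1 + t / 2) ≤ ε * (H₀ / 4) * E := by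
    have h := mul_le_mul_of_nonneg_right hg.le hEpos.le
    have key : (ε * K * Real.exp (-t) + C₀ * Real.exp (-(t / 2)) + C₀ / (1 + t / 2)) * E
        = ε * K * (Real.exp (-t) * E) + C₀ * (Real.exp (-(t / 2)) * E)
          + C₀ * E / (1 + t / 2) := by ring
    rw [key, e1, e2] at h
    linarith
  -- linearity of the integral
  have hlin : (∫ τ in (0:ℝ)..t, Real.exp τ * (ε * H τ - C₀ * (1 + τ) ^ p))
      = ε * (∫ τ in (0:ℝ)..t, Real.exp τ * H τ)
        - C₀ * ∫ τ in (0:ℝ)..t, Real.exp τ * (1 + τ) ^ p := by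
    rw [← intervalIntegral.integral_const_mul, ← intervalIntegral.integral_const_mul,
      ← integral_sub ((hcontH 0 t le_rfl ht0).const_mul ε)
        ((hcontR 0 t le_rfl ht0).const_mul C₀)]
    apply integral_congr
    intro τ _
    ring
  -- lower bound on ∫ exp * H
  have hA : (-M) * (Real.exp T - 1) + (H₀ / 2) * (E - Real.exp T)
      ≤ ∫ τ in (0:ℝ)..t, Real.exp τ * H τ := by
    rw [← integral_add_adjacent_intervals (hcontH 0 T le_rfl hT0) (hcontH T t hT0 ht0)]
    have hA1 : (Real.exp T - Real.exp 0) * (-M) ≤ ∫ τ in (0:ℝ)..T, Real.exp τ * H τ := by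
      rw [← integral_exp, ← intervalIntegral.integral_mul_const]
      apply integral_mono_on hT0 (hcexp 0 T (-M)) (hcontH 0 T le_rfl hT0)
      intro x hx
      have h1 : -M ≤ H x := by
        have := hM x hx.1
        have := neg_abs_le (H x)
        linarith
      exact mul_le_mul_of_nonneg_left h1 (Real.exp_pos x).le
    have hA2 : (Real.exp t - Real.exp T) * (H₀ / 2) ≤ ∫ τ in T..t, Real.exp τ * H τ := by
      rw [← integral_exp, ← intervalIntegral.integral_mul_const]
      apply integral_mono_on hTt (hcexp T t (H₀/2)) (hcontH T t hT0 ht0)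
      intro x hx
      have h1 : H₀ / 2 ≤ H x := hT₀ x (le_trans (le_max_left _ _) hx.1)
      exact mul_le_mul_of_nonneg_left h1 (Real.exp_pos x).le
    rw [Real.exp_zero] at hA1
    rw [← hE] at hA2
    linarith [hA1, hA2]
  -- upper bound on ∫ exp * (1+τ)^p
  have hB : (∫ τ in (0:ℝ)..t, Real.exp τ * (1 + τ) ^ p)
      ≤ S + E / (1 + t / 2) := by
    rw [← integral_add_adjacent_intervals (hcontR 0 (t/2) le_rfl ht20)
      (hcontR (t/2) t ht20 ht0)]
    have hB1 : (∫ τ in (0:ℝ)..(t/2), Real.exp τ * (1 + τ) ^ p)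
        ≤ (Real.exp (t/2) - Real.exp 0) * 1 := by
      rw [← integral_exp, ← intervalIntegral.integral_mul_const]
      apply integral_mono_on ht20 (hcontR 0 (t/2) le_rfl ht20) (hcexp 0 (t/2) 1)
      intro x hx
      have h1 : (1 + x) ^ p ≤ 1 :=
        Real.rpow_le_one_of_one_le_of_nonpos (by linarith [hx.1]) (by linarith)
      exact mul_le_mul_of_nonneg_left h1 (Real.exp_pos x).le
    have hB2 : (∫ τ in (t/2)..t, Real.exp τ * (1 + τ) ^ p)
        ≤ (Real.exp t - Real.exp (t/2)) * (1 + t/2)⁻¹ := by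
      rw [← integral_exp, ← intervalIntegral.integral_mul_const]
      apply integral_mono_on ht2t (hcontR (t/2) t ht20 ht0) (hcexp (t/2) t (1 + t/2)⁻¹)
      intro x hx
      have hx1 : (1:ℝ) ≤ 1 + x := by linarith [le_trans ht20 hx.1]
      have h1 : (1 + x) ^ p ≤ (1 + x) ^ (-1 : ℝ) :=
        Real.rpow_le_rpow_of_exponent_le hx1 hp1
      have h2 : (1 + x) ^ (-1 : ℝ) = (1 + x)⁻¹ := Real.rpow_neg_one _
      have h3 : (1 + x)⁻¹ ≤ (1 + t/2)⁻¹ := by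
        apply inv_anti₀ hDpos
        linarith [hx.1]
      have h4 : (1 + x) ^ p ≤ (1 + t/2)⁻¹ := by rw [h2] at h1; linarith
      exact mul_le_mul_of_nonneg_left h4 (Real.exp_pos x).le
    rw [Real.exp_zero] at hB1
    rw [← hE, ← hS] at hB2
    rw [← hS] at hB1
    have hinv : (0:ℝ) ≤ (1 + t/2)⁻¹ := (inv_pos.mpr hDpos).le
    have h5 : (E - S) * (1 + t/2)⁻¹ ≤ E * (1 + t/2)⁻¹ :=
      mul_le_mul_of_nonneg_right (by linarith) hinv
    have h6 : E / (1 + t/2) = E * (1 + t/2)⁻¹ := div_eq_mul_inv _ _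
    linarith
  -- combine
  rw [hlin]
  have hεM : 0 ≤ ε * M := mul_nonneg hε.le hM0
  have hεA := mul_le_mul_of_nonneg_left hA hε.le
  have hCB := mul_le_mul_of_nonneg_left hB hC₀.le
  rw [hK] at hg'
  have hexp1 : ε * ((-M) * (Real.exp T - 1) + H₀ / 2 * (E - Real.exp T))
      = ε * (H₀ / 2) * E - ε * ((M + H₀ / 2) * Real.exp T) + ε * M := by ring
  rw [hexp1] at hεA
  have hexp2 : C₀ * (S + E / (1 + t / 2)) = C₀ * S + C₀ * E / (1 + t / 2) := by ring
  rw [hexp2] at hCB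
  linarith
end
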